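/- arXiv:math/9607222 — 2 statements merged into one kernel-verified Lean document; each statement's English description precedes it below -/
import Mathlib

section
/- Let G be a group and H = (G° ⋊ G*)/K where G° is a normal subgroup with a homomorphism Ad : G° → G* ≤ Aut-type group, and K = {(x⁻¹, Ad x) : x ∈ [G,G]} with [G,G] ⊆ G°. If [g*, T*] ⊆ Ad[G,G] for a subgroup T* ≤ G* and an element g* ∈ G*, then the image of T* in H normalizes the image of the subgroup generated by G° and g*. -/
/-!
Conjugation by `inr t` maps `inl G°` onto itself and sends `inr g*` to
`inr (t g* t⁻¹ g*⁻¹) * inr g*`. As the inverse of `[g*, t]`, the element `t g* t⁻¹ g*⁻¹` is some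
`Ad d` with `d ∈ D`, and modulo `K` the element `inr (Ad d)` equals `inl d`, so the conjugate
stays in the image of `⟨G°, g*⟩`.
-/

open SemidirectProduct

section
variable {N G E : Type*} [Group N] [Group G] [Group E] {φ : G →* MulAut N}

theorem QuotientGroup.mk'_inl_eq_mk'_inr {K : Subgroup (N ⋊[φ] G)} [K.Normal] {n : N} {g : G}
    (h : (⟨n⁻¹, g⟩ : N ⋊[φ] G) ∈ K) :
    QuotientGroup.mk' K (inl n) = QuotientGroup.mk' K (inr g) := by
  rwa [QuotientGroup.mk'_apply, QuotientGroup.mk'_apply, QuotientGroup.eq, ← map_inv,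
    ← mk_eq_inl_mul_inr]

theorem SemidirectProduct.conj_map_inr_mem_map_range_inl_sup_zpowers (f : N ⋊[φ] G →* E)
    {g t : G} (hcomm : f (inr (t * g * t⁻¹ * g⁻¹)) ∈ inl.range.map f) {x : E}
    (hx : x ∈ (inl.range ⊔ Subgroup.zpowers (inr g)).map f) :
    f (inr t) * x * (f (inr t))⁻¹ ∈ (inl.range ⊔ Subgroup.zpowers (inr g)).map f := by
  set L := (inl.range ⊔ Subgroup.zpowers (inr g)).map f
  suffices inl.range ⊔ Subgroup.zpowers (inr g) ≤
      (L.comap (MulAut.conj (f (inr t))).toMonoidHom).comap f by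
    obtain ⟨y, hy, rfl⟩ := hx
    exact this hy
  have hconj : ∀ y, (MulAut.conj (f (inr t))).toMonoidHom (f y) =
      f (inr t * y * (inr t)⁻¹) := by
    intro y
    simp
  refine sup_le ?_ (Subgroup.zpowers_le.mpr ?_)
  · rintro _ ⟨n, rfl⟩
    rw [Subgroup.mem_comap, Subgroup.mem_comap, hconj, ← map_inv inr, ← inl_aut]
    exact Subgroup.mem_map_of_mem f (Subgroup.mem_sup_left ⟨_, rfl⟩)
  · rw [Subgroup.mem_comap, Subgroup.mem_comap, hconj, ← map_inv inr, ← map_mul, ← map_mul,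
      show t * g * t⁻¹ = t * g * t⁻¹ * g⁻¹ * g by group, map_mul, map_mul]
    exact L.mul_mem (Subgroup.map_mono le_sup_left hcomm)
      (Subgroup.mem_map_of_mem f (Subgroup.mem_sup_right (Subgroup.mem_zpowers _)))

end

theorem stmt_8_general {G₀ Gs : Type*} [Group G₀] [Group Gs]
    (act : Gs →* MulAut G₀) (Ad : G₀ →* Gs)
    (D : Subgroup G₀)
    (K : Subgroup (G₀ ⋊[act] Gs)) [K.Normal]
    (hK : ∀ z : G₀ ⋊[act] Gs, z ∈ K ↔ ∃ x ∈ D, z = ⟨x⁻¹, Ad x⟩)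
    (Ts : Subgroup Gs) (gs : Gs)
    (hcomm : ∀ t ∈ Ts, gs * t * gs⁻¹ * t⁻¹ ∈ D.map Ad) :
    ∀ t ∈ Ts,
      QuotientGroup.mk' K (SemidirectProduct.inr t) ∈
        Subgroup.normalizer ((Subgroup.map (QuotientGroup.mk' K)
          ((⊤ : Subgroup G₀).map (SemidirectProduct.inl : G₀ →* G₀ ⋊[act] Gs) ⊔
            Subgroup.zpowers (SemidirectProduct.inr gs)) : Subgroup _) : Set _) := by
  intro t ht
  rw [← MonoidHom.range_eq_map]
  refine Subgroup.le_normalizer_iff.mpr ?_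
    (Subgroup.mem_map_of_mem ((QuotientGroup.mk' K).comp inr) ht)
  rintro _ ⟨t, ht, rfl⟩ x hx
  obtain ⟨d, hd, hAd⟩ := hcomm t ht
  have hcomm_inv : t * gs * t⁻¹ * gs⁻¹ = Ad d⁻¹ := by
    rw [map_inv, hAd]
    group
  have hdK : (⟨(d⁻¹)⁻¹, Ad d⁻¹⟩ : G₀ ⋊[act] Gs) ∈ K := (hK _).mpr ⟨d⁻¹, D.inv_mem hd, rfl⟩
  refine conj_map_inr_mem_map_range_inl_sup_zpowers _ ?_ hx
  rw [hcomm_inv, ← QuotientGroup.mk'_inl_eq_mk'_inr hdK]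
  exact Subgroup.mem_map_of_mem _ ⟨d⁻¹, rfl⟩

/-- Let `H = (G° ⋊ G*)/K` with `K = {(x⁻¹, Ad x) : x ∈ D}`.
If `[g*, t] ∈ Ad D` for every `t ∈ T*`, then the image of `T*` in `H` normalizes the
image of the subgroup generated by `G°` and `g*`. -/
theorem stmt_8 {G₀ Gs : Type*} [Group G₀] [Group Gs]
    (act : Gs →* MulAut G₀) (Ad : G₀ →* Gs)
    (hequiv : ∀ (s : Gs) (x : G₀), Ad (act s x) = s * Ad x * s⁻¹)
    (D : Subgroup G₀)
    (hinj : Set.InjOn Ad (D : Set G₀))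
    (hAdD : (D.map Ad).Normal)
    (K : Subgroup (G₀ ⋊[act] Gs)) [K.Normal]
    (hK : ∀ z : G₀ ⋊[act] Gs, z ∈ K ↔ ∃ x ∈ D, z = ⟨x⁻¹, Ad x⟩)
    (Ts : Subgroup Gs) (gs : Gs)
    (hcomm : ∀ t ∈ Ts, gs * t * gs⁻¹ * t⁻¹ ∈ D.map Ad) :
    ∀ t ∈ Ts,
      QuotientGroup.mk' K (SemidirectProduct.inr t) ∈
        Subgroup.normalizer ((Subgroup.map (QuotientGroup.mk' K)
          ((⊤ : Subgroup G₀).map (SemidirectProduct.inl : G₀ →* G₀ ⋊[act] Gs) ⊔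
            Subgroup.zpowers (SemidirectProduct.inr gs)) : Subgroup _) : Set _) :=
  stmt_8_general act Ad D K hK Ts gs hcomm
end

section
/- Let S* be a compact torus, written as an internal direct product S* = S_L × S_Δ of subtori, sitting inside a product L* × T* of groups with S_L ≤ L*. Let S_⊥ be the image of S_Δ under the projection L* × T* → L*. Then S_L ∩ S_⊥ = {e} and S* ≤ S_L × S_⊥ × T* (as subgroups of L* × T*, identifying S_⊥ × T* appropriately). -/
namespace Subgroup

variable {L T : Type*} [Group L] [Group T]

theorem map_fst_inf_map_fst_eq_bot {A B : Subgroup (L × T)} (hAB : A ⊓ B = ⊥)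
    (hker : (A ⊔ B) ⊓ (⊥ : Subgroup L).prod ⊤ ≤ B) :
    A.map (MonoidHom.fst L T) ⊓ B.map (MonoidHom.fst L T) = ⊥ := by
  rw [eq_bot_iff]
  rintro x ⟨⟨a, ha, rfl⟩, ⟨b, hb, hba⟩⟩
  have hab : a * b⁻¹ ∈ B := hker
    ⟨Subgroup.mul_mem _ (mem_sup_left ha) (Subgroup.inv_mem _ (mem_sup_right hb)), by
      simp only [MonoidHom.coe_fst] at hba
      simp [mem_prod, hba]⟩
  have haB : a ∈ B := by simpa using mul_mem hab hb
  have ha1 : a ∈ A ⊓ B := ⟨ha, haB⟩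
  rw [hAB, mem_bot] at ha1
  simp [ha1]

theorem le_map_fst_prod_top (B : Subgroup (L × T)) :
    B ≤ (B.map (MonoidHom.fst L T)).prod ⊤ :=
  le_prod_iff.mpr ⟨le_rfl, le_top⟩

end Subgroup

theorem stmt_9_general {L T : Type*} [Group L] [Group T]
    (S SL SΔ : Subgroup (L × T))
    (hsup : SL ⊔ SΔ = S) (hinf : SL ⊓ SΔ = ⊥)
    (hcontains : S ⊓ ((⊥ : Subgroup L).prod ⊤) ≤ SΔ)
    (Sperp : Subgroup L) (hSperp : Sperp = SΔ.map (MonoidHom.fst L T)) :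
    (SL.map (MonoidHom.fst L T)) ⊓ Sperp = ⊥ ∧
      S ≤ SL ⊔ Sperp.prod ⊤ := by
  subst hSperp hsup
  exact ⟨Subgroup.map_fst_inf_map_fst_eq_bot hinf hcontains,
    sup_le_sup_left (Subgroup.le_map_fst_prod_top SΔ) SL⟩

/-- If the compact torus `S* ≤ L* × T*` is an internal direct product
`S_L × S_Δ` with `S_L ≤ L* × {e}` and `S* ∩ ({e} × T*) ≤ S_Δ`, and `S_⊥` is the
projection of `S_Δ` to `L*`, then `S_L ∩ S_⊥ = {e}` (as subgroups of `L*`) and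
`S* ≤ S_L × S_⊥ × T*`. -/
theorem stmt_9 {L T : Type*} [Group L] [Group T]
    [TopologicalSpace L] [TopologicalSpace T]
    [IsTopologicalGroup L] [IsTopologicalGroup T]
    (S SL SΔ : Subgroup (L × T))
    (hScpt : IsCompact (S : Set (L × T))) (hSconn : IsConnected (S : Set (L × T)))
    (hScomm : ∀ x ∈ S, ∀ y ∈ S, x * y = y * x)
    (hSL : SL ≤ S) (hSΔ : SΔ ≤ S)
    (hsup : SL ⊔ SΔ = S) (hinf : SL ⊓ SΔ = ⊥)
    (hSLinL : ∀ x ∈ SL, x.2 = 1)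
    (hcontains : S ⊓ ((⊥ : Subgroup L).prod ⊤) ≤ SΔ)
    (Sperp : Subgroup L) (hSperp : Sperp = SΔ.map (MonoidHom.fst L T)) :
    (SL.map (MonoidHom.fst L T)) ⊓ Sperp = ⊥ ∧
      S ≤ SL ⊔ Sperp.prod ⊤ :=
  stmt_9_general S SL SΔ hsup hinf hcontains Sperp hSperp
end
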